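/- arXiv:2006.01669 — 9 statements merged into one kernel-verified Lean document; each statement's English description precedes it below -/
import Mathlib

section
/- There exists D > 0 such that for every real d ≥ D one has the inequality ∫_{arsinh d}^{(3/2)·log d} (sinh x)² / √((sinh x)² − d²) dx < cosh((3/2)·log d) − 1, where the integral is the Lebesgue integral over the interval (arsinh d, (3/2)·log d]. -/
/-!
The integrand is at most `sinh x cosh x / √(sinh² x - d²)`, whose primitive
`√(sinh² x - d²)` vanishes at the neck `x = arsinh d`. Hence the area of the slice up to height
`ρ` is at most `√(sinh² ρ - d²)`, and this is smaller than `cosh ρ - 1` as soon as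
`2 cosh ρ < d² + 2`; for `ρ = (3/2) log d` this holds because `e^ρ = d^(3/2) ≤ d²`.
-/

open Real MeasureTheory Set

/-- No integrability is assumed: a non-integrable `f` has integral `0`, covered by `G a ≤ G b`. -/
theorem setIntegral_Ioc_le_sub_of_hasDerivAt {f g G : ℝ → ℝ} {a b : ℝ} (hab : a ≤ b)
    (hG : ContinuousOn G (Icc a b)) (hderiv : ∀ x ∈ Ioo a b, HasDerivAt G (g x) x)
    (hfg : ∀ x ∈ Ioo a b, f x ≤ g x) (hGab : G a ≤ G b) :
    ∫ x in Ioc a b, f x ≤ G b - G a := by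
  by_cases hf : IntegrableOn f (Ioc a b)
  · rw [← intervalIntegral.integral_of_le hab]
    exact intervalIntegral.integral_le_sub_of_hasDeriv_right_of_le hab hG
      (fun x hx => (hderiv x hx).hasDerivWithinAt)
      ((integrableOn_Icc_iff_integrableOn_Ioc (f := f)).mpr hf) hfg
  · rw [integral_undef hf]
    linarith

theorem hasDerivAt_sqrt_sinh_sq_sub_sq {d x : ℝ} (h : d ^ 2 < sinh x ^ 2) :
    HasDerivAt (fun y => √(sinh y ^ 2 - d ^ 2)) (sinh x * cosh x / √(sinh x ^ 2 - d ^ 2)) x := by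
  have hinner : HasDerivAt (fun y => sinh y ^ 2 - d ^ 2) (2 * sinh x * cosh x) x := by
    simpa using ((hasDerivAt_sinh x).pow 2).sub_const (d ^ 2)
  convert hinner.sqrt (sub_pos.mpr h).ne' using 1
  field_simp

theorem setIntegral_sinh_sq_div_sqrt_le {d : ℝ} (hd : 0 ≤ d) (ρ : ℝ) :
    ∫ x in Ioc (arsinh d) ρ, sinh x ^ 2 / √(sinh x ^ 2 - d ^ 2) ≤ √(sinh ρ ^ 2 - d ^ 2) := by
  rcases lt_or_ge ρ (arsinh d) with hρ | hρ
  · rw [Ioc_eq_empty_of_le hρ.le, setIntegral_empty]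
    positivity
  have hsinh : ∀ x ∈ Ioo (arsinh d) ρ, d < sinh x := fun x hx => by
    simpa only [sinh_arsinh] using sinh_lt_sinh.mpr hx.1
  have hbound : ∀ x ∈ Ioo (arsinh d) ρ,
      sinh x ^ 2 / √(sinh x ^ 2 - d ^ 2) ≤ sinh x * cosh x / √(sinh x ^ 2 - d ^ 2) :=
    fun x hx => by
      have hx0 : 0 ≤ sinh x := hd.trans (hsinh x hx).le
      rw [sq]
      gcongr
      exact (sinh_lt_cosh x).le
  have := setIntegral_Ioc_le_sub_of_hasDerivAt hρ (by fun_prop)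
    (fun x hx => hasDerivAt_sqrt_sinh_sq_sub_sq (pow_lt_pow_left₀ (hsinh x hx) hd two_ne_zero))
    hbound (by simp only [sinh_arsinh, sub_self, sqrt_zero]; positivity)
  simpa only [sinh_arsinh, sub_self, sqrt_zero, sub_zero] using this

theorem sqrt_sinh_sq_sub_sq_lt_cosh_sub_one {d ρ : ℝ} (hρ : ρ ≠ 0) (h : 2 * cosh ρ < d ^ 2 + 2) :
    √(sinh ρ ^ 2 - d ^ 2) < cosh ρ - 1 := by
  rw [sqrt_lt' (sub_pos.mpr (one_lt_cosh.mpr hρ))]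
  nlinarith [cosh_sq ρ]

theorem two_mul_cosh_lt_exp_add_two {ρ : ℝ} (hρ : 0 < ρ) : 2 * cosh ρ < exp ρ + 2 := by
  rw [cosh_eq]
  linarith [exp_lt_one_iff.mpr (neg_neg_of_pos hρ)]

theorem catenoid_slice_area_lt_disks :
    ∃ D : ℝ, 0 < D ∧ ∀ d : ℝ, D ≤ d →
      (∫ x in Set.Ioc (Real.arsinh d) ((3/2) * Real.log d),
          (Real.sinh x) ^ 2 / Real.sqrt ((Real.sinh x) ^ 2 - d ^ 2))
        < Real.cosh ((3/2) * Real.log d) - 1 := by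
  refine ⟨2, two_pos, fun d hd => ?_⟩
  have hlog : 0 < log d := log_pos (by linarith)
  have hρ : 0 < (3/2) * log d := by positivity
  have hexp : exp ((3/2) * log d) ≤ d ^ 2 := by
    calc exp ((3/2) * log d) ≤ exp (log d + log d) := exp_le_exp.mpr (by linarith)
      _ = d ^ 2 := by rw [exp_add, exp_log (by linarith), sq]
  calc _ ≤ √(sinh ((3/2) * log d) ^ 2 - d ^ 2) := setIntegral_sinh_sq_div_sqrt_le (by linarith) _
    _ < cosh ((3/2) * log d) - 1 := sqrt_sinh_sq_sub_sq_lt_cosh_sub_one hρ.ne'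
        (by linarith [two_mul_cosh_lt_exp_add_two hρ])
end

section
/- For every real d > 0 one has the strict inequality ∫_{arsinh d}^{arsinh(d+1)} (sinh x)² / √((sinh x)² − d²) dx < (d + 1) · log((√(1 + (d+1)²) + √(2d + 1)) / √(1 + d²)). -/
/-!
On `(arsinh d, arsinh (d + 1))` one has `0 < sinh x < d + 1`, so the integrand
`sinh² x / √(sinh² x - d²)` is strictly smaller than `(d + 1) · sinh x / √(sinh² x - d²)`.
The latter has the elementary primitive `(d + 1) · log (cosh x + √(sinh² x - d²))`; being a
nonnegative derivative it is integrable, and it dominates the original integrand, which is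
therefore integrable as well. Evaluating the primitive at the endpoints, where
`cosh (arsinh t) = √(1 + t²)`, gives the right-hand side.
-/

open Real MeasureTheory Set intervalIntegral

theorem intervalIntegral_lt_of_lt_on_Ioo {f g : ℝ → ℝ} {a b : ℝ} (hab : a < b)
    (hf : IntervalIntegrable f volume a b) (hg : IntervalIntegrable g volume a b)
    (hlt : ∀ x ∈ Ioo a b, f x < g x) : ∫ x in a..b, f x < ∫ x in a..b, g x := by
  rw [← sub_pos, ← integral_sub hg hf]
  exact intervalIntegral_pos_of_pos_on (hg.sub hf) (fun x hx ↦ sub_pos.2 (hlt x hx)) hab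

theorem arsinh_lt_iff_lt_sinh {s x : ℝ} : arsinh s < x ↔ s < sinh x := by
  rw [← sinh_lt_sinh, sinh_arsinh]

theorem le_arsinh_iff_sinh_le {t x : ℝ} : x ≤ arsinh t ↔ sinh x ≤ t := by
  rw [← sinh_le_sinh, sinh_arsinh]

theorem hasDerivAt_log_cosh_add_sqrt_sinh_sq_sub_sq {d x : ℝ} (hx : d ^ 2 < sinh x ^ 2) :
    HasDerivAt (fun y ↦ log (cosh y + √(sinh y ^ 2 - d ^ 2)))
      (sinh x / √(sinh x ^ 2 - d ^ 2)) x := by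
  have hrad : 0 < sinh x ^ 2 - d ^ 2 := sub_pos.2 hx
  have hsqrt : 0 < √(sinh x ^ 2 - d ^ 2) := sqrt_pos.2 hrad
  have hsum : 0 < cosh x + √(sinh x ^ 2 - d ^ 2) := by positivity
  have hrad' : HasDerivAt (fun y ↦ sinh y ^ 2 - d ^ 2) (2 * sinh x * cosh x) x := by
    simpa using ((hasDerivAt_sinh x).fun_pow 2).sub_const (d ^ 2)
  convert ((hasDerivAt_cosh x).fun_add (hrad'.sqrt hrad.ne')).log hsum.ne' using 1
  field_simp
  ring

theorem continuous_log_cosh_add_sqrt_sinh_sq_sub_sq (d : ℝ) :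
    Continuous fun y ↦ log (cosh y + √(sinh y ^ 2 - d ^ 2)) :=
  (continuous_cosh.add (by fun_prop)).log fun y ↦ (add_pos_of_pos_of_nonneg (cosh_pos y)
    (sqrt_nonneg _)).ne'

theorem sq_lt_sinh_sq_of_arsinh_lt {d x : ℝ} (hd : 0 ≤ d) (hx : arsinh d < x) :
    d ^ 2 < sinh x ^ 2 :=
  pow_lt_pow_left₀ (arsinh_lt_iff_lt_sinh.1 hx) hd two_ne_zero

theorem integral_sinh_div_sqrt_sinh_sq_sub_sq {d b : ℝ} (hd : 0 ≤ d) (hb : arsinh d ≤ b) :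
    IntervalIntegrable (fun x ↦ sinh x / √(sinh x ^ 2 - d ^ 2)) volume (arsinh d) b ∧
      ∫ x in arsinh d..b, sinh x / √(sinh x ^ 2 - d ^ 2) =
        log ((cosh b + √(sinh b ^ 2 - d ^ 2)) / √(1 + d ^ 2)) := by
  have hderiv : ∀ x ∈ Ioo (arsinh d) b, HasDerivAt
      (fun y ↦ log (cosh y + √(sinh y ^ 2 - d ^ 2))) (sinh x / √(sinh x ^ 2 - d ^ 2)) x :=
    fun x hx ↦ hasDerivAt_log_cosh_add_sqrt_sinh_sq_sub_sq
      (sq_lt_sinh_sq_of_arsinh_lt hd hx.1)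
  have hcont : ContinuousOn (fun y ↦ log (cosh y + √(sinh y ^ 2 - d ^ 2))) (Icc (arsinh d) b) :=
    (continuous_log_cosh_add_sqrt_sinh_sq_sub_sq d).continuousOn
  have hint : IntervalIntegrable (fun x ↦ sinh x / √(sinh x ^ 2 - d ^ 2)) volume (arsinh d) b :=
    (intervalIntegrable_iff_integrableOn_Ioc_of_le hb).2 <| integrableOn_deriv_of_nonneg hcont
      hderiv fun x hx ↦ div_nonneg (hd.trans (arsinh_lt_iff_lt_sinh.1 hx.1).le) (sqrt_nonneg _)
  refine ⟨hint, ?_⟩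
  rw [integral_eq_sub_of_hasDerivAt_of_le hb hcont hderiv hint, sinh_arsinh, cosh_arsinh,
    sub_self, sqrt_zero, add_zero, ← log_div]
  · exact (add_pos_of_pos_of_nonneg (cosh_pos b) (sqrt_nonneg _)).ne'
  · positivity

theorem sq_div_eq_mul_div {α : Type*} [DivisionRing α] (a b : α) : a ^ 2 / b = a * (a / b) := by
  rw [sq, mul_div_assoc]

theorem intervalIntegrable_sinh_sq_div_sqrt_sinh_sq_sub_sq {d t : ℝ} (hd : 0 ≤ d) (ht : d ≤ t) :
    IntervalIntegrable (fun x ↦ sinh x ^ 2 / √(sinh x ^ 2 - d ^ 2)) volume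
      (arsinh d) (arsinh t) := by
  have hb : arsinh d ≤ arsinh t := arsinh_le_arsinh.2 ht
  refine ((integral_sinh_div_sqrt_sinh_sq_sub_sq hd hb).1.const_mul t).mono_fun'
    (Measurable.aestronglyMeasurable (by fun_prop)) ?_
  rw [Filter.EventuallyLE, uIoc_of_le hb, ae_restrict_iff' measurableSet_Ioc]
  refine .of_forall fun x hx ↦ ?_
  have hs : 0 ≤ sinh x := hd.trans (arsinh_lt_iff_lt_sinh.1 hx.1).le
  rw [norm_of_nonneg (by positivity), sq_div_eq_mul_div]
  exact mul_le_mul_of_nonneg_right (le_arsinh_iff_sinh_le.1 hx.2) (by positivity)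

theorem catenoid_I1_bound :
    ∀ d : ℝ, 0 < d →
      (∫ x in Set.Ioc (Real.arsinh d) (Real.arsinh (d + 1)),
          (Real.sinh x) ^ 2 / Real.sqrt ((Real.sinh x) ^ 2 - d ^ 2))
        < (d + 1) * Real.log ((Real.sqrt (1 + (d + 1) ^ 2) + Real.sqrt (2 * d + 1))
            / Real.sqrt (1 + d ^ 2)) := by
  intro d hd
  have hlt : arsinh d < arsinh (d + 1) := arsinh_lt_arsinh.2 (lt_add_one d)
  obtain ⟨hint, hval⟩ := integral_sinh_div_sqrt_sinh_sq_sub_sq hd.le hlt.le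
  have hpointwise : ∀ x ∈ Ioo (arsinh d) (arsinh (d + 1)),
      sinh x ^ 2 / √(sinh x ^ 2 - d ^ 2) < (d + 1) * (sinh x / √(sinh x ^ 2 - d ^ 2)) := by
    intro x hx
    have hs : d < sinh x := arsinh_lt_iff_lt_sinh.1 hx.1
    have hsqrt : 0 < √(sinh x ^ 2 - d ^ 2) :=
      sqrt_pos.2 (sub_pos.2 (sq_lt_sinh_sq_of_arsinh_lt hd.le hx.1))
    rw [sq_div_eq_mul_div]
    exact mul_lt_mul_of_pos_right ((sinh_lt_sinh.2 hx.2).trans_eq (sinh_arsinh _))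
      (div_pos (hd.trans hs) hsqrt)
  rw [← integral_of_le hlt.le]
  calc ∫ x in arsinh d..arsinh (d + 1), sinh x ^ 2 / √(sinh x ^ 2 - d ^ 2)
      < ∫ x in arsinh d..arsinh (d + 1), (d + 1) * (sinh x / √(sinh x ^ 2 - d ^ 2)) :=
        intervalIntegral_lt_of_lt_on_Ioo hlt
          (intervalIntegrable_sinh_sq_div_sqrt_sinh_sq_sub_sq hd.le (lt_add_one d).le)
          (hint.const_mul _) hpointwise
    _ = _ := by
        rw [intervalIntegral.integral_const_mul, hval, cosh_arsinh, sinh_arsinh,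
          show (d + 1) ^ 2 - d ^ 2 = 2 * d + 1 by ring]
end

section
/- The quotient ((d + 1) · log((√(1 + (d+1)²) + √(2d + 1)) / √(1 + d²))) / √(2d) tends to 1 as d → +∞ (limit along the filter atTop on the reals). -/
/-! Let `r` be the argument of the logarithm and `C = √(1 + d²)`. Each of `√(1 + (d + 1)²)`,
`√(2d + 1)` and `C` lies within distance `1` of `d + 1`, `√(2d)` and `d` respectively, so the
numerator `C (r - 1)` is `√(2d)` up to a bounded error and `C` is `d + 1` up to a bounded error.
Hence `(d + 1)(r - 1) ~ √(2d)`; in particular `r → 1`, so `log r ~ r - 1`. -/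

open Real Filter Asymptotics Topology

theorem Real.isEquivalent_log_nhds_one : log ~[𝓝 1] (· - 1) := by
  have h := (hasDerivAt_log one_ne_zero).isLittleO
  simp only [log_one, sub_zero, smul_eq_mul, mul_one, inv_one] at h
  exact h

theorem Asymptotics.isEquivalent_of_norm_sub_le {α β : Type*} [NormedField β] {l : Filter α}
    {u v : α → β} {c : ℝ} (huv : ∀ᶠ x in l, ‖u x - v x‖ ≤ c)
    (hv : Tendsto (‖v ·‖) l atTop) : u ~[l] v :=
  (IsBigO.of_bound c (g := fun _ => (1 : β)) (by simpa using huv)).trans_isLittleO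
    ((isLittleO_one_left_iff β).2 hv)

theorem Real.abs_sqrt_add_sub_sqrt_le {x y : ℝ} (hx : 0 ≤ x) (hy : 0 ≤ y) :
    |√(x + y) - √x| ≤ √y := by
  have hmono : √x ≤ √(x + y) := sqrt_le_sqrt (by linarith)
  have hsub : √(x + y) ≤ √x + √y := by
    rw [sqrt_le_left (by positivity), add_sq, sq_sqrt hx, sq_sqrt hy]
    nlinarith [sqrt_nonneg x, sqrt_nonneg y]
  rw [abs_of_nonneg (by linarith)]
  linarith

theorem Real.abs_sqrt_one_add_sq_sub_le {x : ℝ} (hx : 0 ≤ x) : |√(1 + x ^ 2) - x| ≤ 1 := by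
  simpa [add_comm, sqrt_sq hx] using abs_sqrt_add_sub_sqrt_le (sq_nonneg x) zero_le_one

theorem tendsto_sqrt_two_mul_atTop : Tendsto (fun d : ℝ => √(2 * d)) atTop atTop :=
  tendsto_sqrt_atTop.comp (tendsto_id.const_mul_atTop two_pos)

theorem tendsto_sqrt_two_mul_div_add_one_atTop :
    Tendsto (fun d : ℝ => √(2 * d) / (d + 1)) atTop (𝓝 0) := by
  have hlim : Tendsto (fun d : ℝ => 2 * (√(2 * d))⁻¹) atTop (𝓝 0) := by
    simpa using (tendsto_inv_atTop_zero.comp tendsto_sqrt_two_mul_atTop).const_mul 2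
  refine tendsto_of_tendsto_of_tendsto_of_le_of_le' tendsto_const_nhds hlim ?_ ?_
  · filter_upwards [eventually_ge_atTop 0] with d hd
    positivity
  · filter_upwards [eventually_gt_atTop 0] with d hd
    calc √(2 * d) / (d + 1) ≤ √(2 * d) / d := by gcongr; linarith
      _ = 2 * (√(2 * d) / (2 * d)) := by field_simp
      _ = 2 * (√(2 * d))⁻¹ := by rw [sqrt_div_self]

theorem isEquivalent_catenoid_numerator :
    (fun d : ℝ => √(1 + (d + 1) ^ 2) + √(2 * d + 1) - √(1 + d ^ 2)) ~[atTop]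
      fun d => √(2 * d) := by
  refine isEquivalent_of_norm_sub_le (c := 4) ?_ ?_
  · filter_upwards [eventually_ge_atTop 0] with d hd
    have hA := abs_sqrt_one_add_sq_sub_le (by linarith : 0 ≤ d + 1)
    have hB := abs_sqrt_add_sub_sqrt_le (by linarith : 0 ≤ 2 * d) zero_le_one
    have hC := abs_sqrt_one_add_sq_sub_le hd
    rw [sqrt_one] at hB
    rw [norm_eq_abs, abs_le] at *
    constructor <;> linarith
  · exact tendsto_norm_atTop_atTop.comp tendsto_sqrt_two_mul_atTop

theorem isEquivalent_catenoid_denominator :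
    (fun d : ℝ => √(1 + d ^ 2)) ~[atTop] fun d => d + 1 := by
  refine isEquivalent_of_norm_sub_le (c := 2) ?_ ?_
  · filter_upwards [eventually_ge_atTop 0] with d hd
    have hC := abs_sqrt_one_add_sq_sub_le hd
    rw [norm_eq_abs, abs_le] at *
    constructor <;> linarith
  · exact tendsto_norm_atTop_atTop.comp (tendsto_atTop_add_const_right _ 1 tendsto_id)

theorem isEquivalent_catenoid_ratio_sub_one :
    (fun d : ℝ => (d + 1) * ((√(1 + (d + 1) ^ 2) + √(2 * d + 1)) / √(1 + d ^ 2) - 1))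
      ~[atTop] fun d => √(2 * d) := by
  have h := (isEquivalent_catenoid_denominator.symm.div
    (IsEquivalent.refl (u := fun d : ℝ => √(1 + d ^ 2)))).mul
    isEquivalent_catenoid_numerator
  have hC (d : ℝ) : √(1 + d ^ 2) ≠ 0 := by positivity
  convert h using 1 <;> funext d
  · simp only [Pi.mul_apply, Pi.div_apply]
    field_simp
  · simp [hC d]

theorem tendsto_catenoid_ratio :
    Tendsto (fun d : ℝ => (√(1 + (d + 1) ^ 2) + √(2 * d + 1)) / √(1 + d ^ 2)) atTop (𝓝 1) := by
  have h := isEquivalent_catenoid_ratio_sub_one.div (IsEquivalent.refl (u := fun d : ℝ => d + 1))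
  rw [← tendsto_sub_nhds_zero_iff]
  refine (h.symm.tendsto_nhds tendsto_sqrt_two_mul_div_add_one_atTop).congr' ?_
  filter_upwards [eventually_ge_atTop 0] with d hd
  simp only [Pi.div_apply]
  field_simp

theorem catenoid_I1_asymptotic :
    Tendsto (fun d : ℝ =>
        ((d + 1) * Real.log ((Real.sqrt (1 + (d + 1) ^ 2) + Real.sqrt (2 * d + 1))
          / Real.sqrt (1 + d ^ 2))) / Real.sqrt (2 * d))
      atTop (nhds 1) := by
  have hlog := isEquivalent_log_nhds_one.comp_tendsto tendsto_catenoid_ratio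
  have h := (IsEquivalent.refl (u := fun d : ℝ => d + 1)).mul hlog
    |>.trans isEquivalent_catenoid_ratio_sub_one
  refine (isEquivalent_iff_tendsto_one ?_).1 h
  filter_upwards [eventually_gt_atTop 0] with d hd
  positivity
end

section
/- For every real d > 0 and every real x ≥ arsinh(d + 1), one has e^{2x} > 2 + 4d² and the strict inequality (sinh x)² / √((sinh x)² − d²) < e^{2x} / (2·√(e^{2x} − (2 + 4d²))). -/
open Real

theorem catenoid_integrand_pointwise_bound :
    ∀ d : ℝ, 0 < d → ∀ x : ℝ, Real.arsinh (d + 1) ≤ x →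
      2 + 4 * d ^ 2 < Real.exp (2 * x) ∧
      (Real.sinh x) ^ 2 / Real.sqrt ((Real.sinh x) ^ 2 - d ^ 2)
        < Real.exp (2 * x) / (2 * Real.sqrt (Real.exp (2 * x) - (2 + 4 * d ^ 2))) := by
  intro d hd x hx
  have hs : d + 1 ≤ Real.sinh x := by
    have h := Real.sinh_le_sinh.mpr hx
    simpa [Real.sinh_arsinh] using h
  set s := Real.sinh x with hs_def
  have hspos : 0 < s := by linarith
  have hc2 : Real.cosh x ^ 2 = 1 + s ^ 2 := Real.cosh_sq' x
  set c := Real.cosh x with hc_def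
  have hcpos : 0 < c := Real.cosh_pos x
  have hsc : s < c := by nlinarith
  have hE : Real.exp (2 * x) = 1 + 2 * s ^ 2 + 2 * s * c := by
    have h1 : Real.exp (2 * x) = Real.exp x ^ 2 := by
      rw [two_mul, Real.exp_add]; ring
    rw [h1, ← Real.cosh_add_sinh x]
    nlinarith [hc2]
  set E := Real.exp (2 * x) with hE_def
  have hElt : E < 4 * s ^ 2 + 2 := by nlinarith [sq_nonneg (s - c)]
  have hEgt : 1 + 4 * s ^ 2 < E := by nlinarith
  have h1 : 2 + 4 * d ^ 2 < E := by nlinarith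
  refine ⟨h1, ?_⟩
  have hsd : 0 < s ^ 2 - d ^ 2 := by nlinarith
  have hA : 0 < Real.sqrt (s ^ 2 - d ^ 2) := Real.sqrt_pos.mpr hsd
  have hA2 : Real.sqrt (s ^ 2 - d ^ 2) ^ 2 = s ^ 2 - d ^ 2 :=
    Real.sq_sqrt hsd.le
  have hBnn : 0 ≤ Real.sqrt (E - (2 + 4 * d ^ 2)) := Real.sqrt_nonneg _
  have hB : 0 < Real.sqrt (E - (2 + 4 * d ^ 2)) := Real.sqrt_pos.mpr (by linarith)
  have hB2 : Real.sqrt (E - (2 + 4 * d ^ 2)) ^ 2 = E - (2 + 4 * d ^ 2) :=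
    Real.sq_sqrt (by linarith)
  set A := Real.sqrt (s ^ 2 - d ^ 2)
  set B := Real.sqrt (E - (2 + 4 * d ^ 2))
  rw [div_lt_div_iff₀ hA (by linarith)]
  -- goal: s ^ 2 * (2 * B) < E * A
  have hBA : B < 2 * A := by nlinarith
  nlinarith [mul_pos hspos hspos, mul_pos hA hspos]
end

section
/- For every real d > 0 and every real ρ ≥ arsinh(d + 1), one has the strict inequality ∫_{arsinh(d+1)}^{ρ} (sinh x)² / √((sinh x)² − d²) dx < (√(e^{2ρ} − (2 + 4d²)) − √(8d + 2)) / 2. -/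
/-!
For `x ≥ arsinh (d + 1)` the integrand is dominated by `e^{2x} / (2 √(e^{2x} - (2 + 4d²)))`:
the numerator `sinh² x` is at most `e^{2x} / 4`, and since `4 sinh² x = e^{2x} + e^{-2x} - 2`,
the radicand `sinh² x - d²` is at least `(e^{2x} - (2 + 4d²)) / 4`. The dominating function has
antiderivative `√(e^{2x} - (2 + 4d²)) / 2`. Strictness comes from the lower endpoint:
`e^{arsinh y} = y + √(1 + y²) > 2y`, so `e^{2 arsinh (d + 1)} - (2 + 4d²) > 8d + 2`.
-/

open Real Set

theorem four_mul_sinh_sq (x : ℝ) : 4 * sinh x ^ 2 = exp (2 * x) + exp (-(2 * x)) - 2 := by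
  have hinv : exp x * exp (-x) = 1 := by rw [← exp_add, add_neg_cancel, exp_zero]
  rw [sinh_eq, two_mul, neg_add, exp_add, exp_add]
  linear_combination -2 * hinv

theorem sinh_sq_le_exp_two_mul_div_four {x : ℝ} (hx : 0 ≤ x) : sinh x ^ 2 ≤ exp (2 * x) / 4 := by
  have : exp (-(2 * x)) ≤ 2 := (exp_le_one_iff.mpr (by linarith)).trans one_le_two
  linarith [four_mul_sinh_sq x]

theorem exp_two_mul_sub_two_lt_four_mul_sinh_sq (x : ℝ) : exp (2 * x) - 2 < 4 * sinh x ^ 2 := by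
  linarith [four_mul_sinh_sq x, exp_pos (-(2 * x))]

theorem two_mul_lt_exp_arsinh (y : ℝ) : 2 * y < exp (arsinh y) := by
  have : y < √(1 + y ^ 2) := lt_sqrt_of_sq_lt (by linarith)
  rw [exp_arsinh]
  linarith

theorem hasDerivAt_sqrt_exp_two_mul_sub_div_two {c x : ℝ} (h : c < exp (2 * x)) :
    HasDerivAt (fun t ↦ √(exp (2 * t) - c) / 2) (exp (2 * x) / (2 * √(exp (2 * x) - c))) x := by
  have hinner : HasDerivAt (fun t ↦ exp (2 * t) - c) (exp (2 * x) * 2) x :=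
    (((hasDerivAt_id x).const_mul 2).exp.sub_const c).congr_deriv (by simp)
  exact ((hinner.sqrt (sub_pos.mpr h).ne').div_const 2).congr_deriv (by ring)

theorem sinh_sq_div_sqrt_le {d x : ℝ} (h : 2 + 4 * d ^ 2 < exp (2 * x)) :
    sinh x ^ 2 / √(sinh x ^ 2 - d ^ 2) ≤ exp (2 * x) / (2 * √(exp (2 * x) - (2 + 4 * d ^ 2))) := by
  have hx : 0 ≤ x := by
    have : exp 0 < exp (2 * x) := by rw [exp_zero]; nlinarith [sq_nonneg d]
    linarith [exp_lt_exp.mp this]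
  set c := 2 + 4 * d ^ 2
  have hroot : 0 < √(exp (2 * x) - c) := sqrt_pos.mpr (sub_pos.mpr h)
  have hden : √(exp (2 * x) - c) / 2 ≤ √(sinh x ^ 2 - d ^ 2) := by
    rw [← sqrt_sq (zero_le_two : (0:ℝ) ≤ 2), ← sqrt_div' _ (by positivity)]
    exact sqrt_le_sqrt (by linarith [exp_two_mul_sub_two_lt_four_mul_sinh_sq x])
  calc sinh x ^ 2 / √(sinh x ^ 2 - d ^ 2)
      ≤ (exp (2 * x) / 4) / (√(exp (2 * x) - c) / 2) :=
        div_le_div₀ (by positivity) (sinh_sq_le_exp_two_mul_div_four hx) (by positivity) hden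
    _ = exp (2 * x) / (2 * √(exp (2 * x) - c)) := by field_simp; ring

theorem integral_sinh_sq_div_sqrt_le {d a b : ℝ} (hab : a ≤ b) (ha : 2 + 4 * d ^ 2 < exp (2 * a)) :
    ∫ x in a..b, sinh x ^ 2 / √(sinh x ^ 2 - d ^ 2) ≤
      √(exp (2 * b) - (2 + 4 * d ^ 2)) / 2 - √(exp (2 * a) - (2 + 4 * d ^ 2)) / 2 := by
  have hc : ∀ x ∈ Icc a b, 2 + 4 * d ^ 2 < exp (2 * x) := fun x hx ↦
    ha.trans_le (exp_le_exp.mpr (by linarith [hx.1]))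
  have hderiv : ∀ x ∈ Icc a b, HasDerivAt (fun t ↦ √(exp (2 * t) - (2 + 4 * d ^ 2)) / 2)
      (exp (2 * x) / (2 * √(exp (2 * x) - (2 + 4 * d ^ 2)))) x := fun x hx ↦
    hasDerivAt_sqrt_exp_two_mul_sub_div_two (hc x hx)
  have hcont : ContinuousOn (fun x ↦ sinh x ^ 2 / √(sinh x ^ 2 - d ^ 2)) (Icc a b) := by
    refine ContinuousOn.div (by fun_prop) (by fun_prop) fun x hx ↦ (sqrt_pos.mpr ?_).ne'
    linarith [exp_two_mul_sub_two_lt_four_mul_sinh_sq x, hc x hx]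
  exact intervalIntegral.integral_le_sub_of_hasDeriv_right_of_le hab
    (fun x hx ↦ (hderiv x hx).continuousAt.continuousWithinAt)
    (fun x hx ↦ (hderiv x (Ioo_subset_Icc_self hx)).hasDerivWithinAt) hcont.integrableOn_Icc
    (fun x hx ↦ sinh_sq_div_sqrt_le (hc x (Ioo_subset_Icc_self hx)))

theorem catenoid_I2_bound :
    ∀ d : ℝ, 0 < d → ∀ ρ : ℝ, Real.arsinh (d + 1) ≤ ρ →
      (∫ x in Set.Ioc (Real.arsinh (d + 1)) ρ,
          (Real.sinh x) ^ 2 / Real.sqrt ((Real.sinh x) ^ 2 - d ^ 2))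
        < (Real.sqrt (Real.exp (2 * ρ) - (2 + 4 * d ^ 2)) - Real.sqrt (8 * d + 2)) / 2 := by
  intro d hd ρ hρ
  have hexp : 4 * (d + 1) ^ 2 < exp (2 * arsinh (d + 1)) := by
    rw [two_mul, exp_add]
    have := two_mul_lt_exp_arsinh (d + 1)
    nlinarith
  have hend : √(8 * d + 2) < √(exp (2 * arsinh (d + 1)) - (2 + 4 * d ^ 2)) :=
    sqrt_lt_sqrt (by linarith) (by linarith)
  rw [← intervalIntegral.integral_of_le hρ]
  linarith [integral_sinh_sq_div_sqrt_le (d := d) hρ (by nlinarith)]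
end

section
/- There exists D > 0 such that for every real d ≥ D one has (d + 1) · log((√(1 + (d+1)²) + √(2d + 1)) / √(1 + d²)) + (√(d³ − (2 + 4d²)) − √(8d + 2)) / 2 < cosh((3/2)·log d) − 1. -/
open Real

theorem catenoid_final_inequality :
    ∃ D : ℝ, 0 < D ∧ ∀ d : ℝ, D ≤ d →
      (d + 1) * Real.log ((Real.sqrt (1 + (d + 1) ^ 2) + Real.sqrt (2 * d + 1))
          / Real.sqrt (1 + d ^ 2))
        + (Real.sqrt (d ^ 3 - (2 + 4 * d ^ 2)) - Real.sqrt (8 * d + 2)) / 2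
        < Real.cosh ((3/2) * Real.log d) - 1 := by
  refine ⟨100, by norm_num, fun d hd => ?_⟩
  have hd0 : (0:ℝ) < d := by linarith
  set s := Real.sqrt d with hs_def
  have hs0 : 0 ≤ s := Real.sqrt_nonneg d
  have hs2 : s ^ 2 = d := Real.sq_sqrt hd0.le
  have hs10 : 10 ≤ s := by nlinarith [hs2, hs0]
  set N := Real.sqrt (1 + (d + 1) ^ 2) + Real.sqrt (2 * d + 1) with hN_def
  set M := Real.sqrt (1 + d ^ 2) with hM_def
  have hM0 : 0 < M := Real.sqrt_pos.2 (by positivity)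
  have hMd : d ≤ M := by
    have h := Real.sqrt_le_sqrt (show d ^ 2 ≤ 1 + d ^ 2 by linarith)
    rwa [Real.sqrt_sq hd0.le] at h
  have hM2 : M ^ 2 = 1 + d ^ 2 := Real.sq_sqrt (by positivity)
  have hN1 : Real.sqrt (1 + (d + 1) ^ 2) ≤ M + 1 := by
    have h : 1 + (d + 1) ^ 2 ≤ (M + 1) ^ 2 := by nlinarith [hM2, hMd]
    have h2 := Real.sqrt_le_sqrt h
    rwa [Real.sqrt_sq (by linarith)] at h2
  have hN2 : Real.sqrt (2 * d + 1) ≤ 1.74 * s := by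
    have h : 2 * d + 1 ≤ (1.74 * s) ^ 2 := by nlinarith [hs2]
    have h2 := Real.sqrt_le_sqrt h
    rwa [Real.sqrt_sq (by positivity)] at h2
  have hN0 : 0 < N := by
    have : 0 < Real.sqrt (1 + (d + 1) ^ 2) := Real.sqrt_pos.2 (by positivity)
    have := Real.sqrt_nonneg (2 * d + 1)
    rw [hN_def]; linarith
  -- bound on the log term
  have hlog : Real.log (N / M) ≤ (1 + 1.74 * s) / d := by
    have h1 := Real.log_le_sub_one_of_pos (div_pos hN0 hM0)
    have h2 : N / M - 1 = (N - M) / M := by field_simp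
    have h3 : (N - M) / M ≤ (1 + 1.74 * s) / d := by
      apply div_le_div₀ (by positivity) (by rw [hN_def]; linarith) hd0 hMd
    linarith
  have hA : (d + 1) * Real.log (N / M) ≤ 1.01 * (1 + 1.74 * s) := by
    have h1 : (d + 1) * Real.log (N / M) ≤ (d + 1) * ((1 + 1.74 * s) / d) :=
      mul_le_mul_of_nonneg_left hlog (by linarith)
    have h2 : (d + 1) * ((1 + 1.74 * s) / d) ≤ 1.01 * (1 + 1.74 * s) := by
      rw [mul_div_assoc', div_le_iff₀ hd0]
      nlinarith [hs0]
    linarith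
  -- bounds on the second term
  have hB1 : Real.sqrt (d ^ 3 - (2 + 4 * d ^ 2)) ≤ s ^ 3 - 2 * s := by
    have h6 : s ^ 6 = d ^ 3 := by rw [← hs2]; ring
    have h4 : s ^ 4 = d ^ 2 := by rw [← hs2]; ring
    have h : d ^ 3 - (2 + 4 * d ^ 2) ≤ (s ^ 3 - 2 * s) ^ 2 := by nlinarith [h6, h4, hs2]
    have hpos : 0 ≤ s ^ 3 - 2 * s := by nlinarith [hs10, hs0]
    have h2 := Real.sqrt_le_sqrt h
    rwa [Real.sqrt_sq hpos] at h2
  have hB2 : 2.82 * s ≤ Real.sqrt (8 * d + 2) := by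
    have h : (2.82 * s) ^ 2 ≤ 8 * d + 2 := by nlinarith [hs2]
    have h2 := Real.sqrt_le_sqrt h
    rwa [Real.sqrt_sq (by positivity)] at h2
  -- RHS lower bound
  have he : Real.exp (Real.log d / 2) = s := by
    have h2 : Real.exp (Real.log d / 2) ^ 2 = d := by
      rw [sq, ← Real.exp_add, show Real.log d / 2 + Real.log d / 2 = Real.log d by ring,
        Real.exp_log hd0]
    rw [hs_def]
    conv_rhs => rw [← h2]
    rw [Real.sqrt_sq (Real.exp_pos _).le]
  have hexp : Real.exp ((3/2) * Real.log d) = s ^ 3 := by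
    rw [show (3/2:ℝ) * Real.log d = Real.log d / 2 + Real.log d / 2 + Real.log d / 2 by ring,
      Real.exp_add, Real.exp_add, he]
    ring
  have hcosh : s ^ 3 / 2 - 1 < Real.cosh ((3/2) * Real.log d) - 1 := by
    rw [Real.cosh_eq, hexp]
    have := Real.exp_pos (-((3/2) * Real.log d))
    linarith
  have hfinal : 1.01 * (1 + 1.74 * s) + (s ^ 3 - 2 * s - 2.82 * s) / 2 < s ^ 3 / 2 - 1 := by
    linarith [hs10]
  have hB : (Real.sqrt (d ^ 3 - (2 + 4 * d ^ 2)) - Real.sqrt (8 * d + 2)) / 2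
      ≤ (s ^ 3 - 2 * s - 2.82 * s) / 2 := by linarith
  linarith
end

section
/- The integral ∫_{arsinh d}^{(3/2)·log d} d / √((sinh x)² − d²) dx tends to π/2 as d → +∞ (limit along the filter atTop on the reals, the integral being the Lebesgue integral over the interval (arsinh d, (3/2)·log d]). -/
/-!
With `G x = arccos (d / sinh x)` one has `G' x = d / (√(sinh² x - d²) · tanh x)` and
`G (arsinh d) = arccos 1 = 0`, so the integrand is `tanh x · G' x`. Since
`tanh (arsinh d) ≤ tanh x < 1` on the domain, the integral lies between `tanh (arsinh d) · G L`
and `G L`, where `L = (3/2) log d`. As `d → ∞`, `tanh (arsinh d) → 1` and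
`d / sinh L ~ 2 d ^ (-1/2) → 0`, so `G L → arccos 0 = π/2`.
-/

open Real Filter MeasureTheory Set Topology

namespace Real

lemma continuous_tanh : Continuous tanh := by
  simp_rw [funext tanh_eq_sinh_div_cosh]
  exact continuous_sinh.div continuous_cosh fun x => (cosh_pos x).ne'

lemma tanh_pos {x : ℝ} (hx : 0 < x) : 0 < tanh x :=
  tanh_eq_sinh_div_cosh x ▸ div_pos (sinh_pos_iff.2 hx) (cosh_pos x)

lemma tanh_monotone : Monotone tanh := fun x y hxy => by
  rw [tanh_eq_sinh_div_cosh, tanh_eq_sinh_div_cosh, div_le_div_iff₀ (cosh_pos x) (cosh_pos y)]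
  have : 0 ≤ sinh (y - x) := sinh_nonneg_iff.2 (sub_nonneg.2 hxy)
  rw [sinh_sub] at this
  linarith

lemma tendsto_tanh_atTop : Tendsto tanh atTop (𝓝 1) := by
  have h : Tendsto (fun x => 1 - 2 / (exp (2 * x) + 1)) atTop (𝓝 1) := by
    simpa using tendsto_const_nhds.sub <| tendsto_const_nhds.div_atTop <|
      tendsto_atTop_add_const_right _ 1 <|
        tendsto_exp_atTop.comp (tendsto_id.const_mul_atTop two_pos)
  refine h.congr fun x => ?_
  rw [tanh_eq, exp_neg, show 2 * x = x + x by ring, exp_add]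
  field_simp
  ring

lemma tendsto_arsinh_atTop : Tendsto arsinh atTop atTop :=
  arsinh_strictMono.monotone.tendsto_atTop_atTop fun b => ⟨sinh b, (arsinh_sinh b).ge⟩

lemma lt_sinh_of_arsinh_lt {d x : ℝ} (h : arsinh d < x) : d < sinh x := by
  simpa using sinh_lt_sinh.2 h

lemma tendsto_exp_div_sinh_mul_atTop {a : ℝ} (ha : 1 < a) :
    Tendsto (fun t => exp t / sinh (a * t)) atTop (𝓝 0) := by
  have hgrow : Tendsto (fun t => exp ((a - 1) * t)) atTop atTop :=
    tendsto_exp_atTop.comp (tendsto_id.const_mul_atTop (by linarith))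
  have hdecay : Tendsto (fun t => exp (-((a + 1) * t))) atTop (𝓝 0) :=
    tendsto_exp_neg_atTop_nhds_zero.comp (tendsto_id.const_mul_atTop (by linarith))
  have hden : Tendsto (fun t => exp ((a - 1) * t) - exp (-((a + 1) * t))) atTop atTop := by
    simpa only [sub_eq_add_neg] using hgrow.atTop_add hdecay.neg
  refine (tendsto_const_nhds (x := (2 : ℝ))).div_atTop hden |>.congr fun t => ?_
  have hsinh : sinh (a * t) = exp t * (exp ((a - 1) * t) - exp (-((a + 1) * t))) / 2 := by
    rw [sinh_eq, mul_sub, ← exp_add, ← exp_add]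
    ring_nf
  rw [hsinh, div_div_eq_mul_div, mul_div_mul_left _ _ (exp_pos t).ne']

lemma tendsto_div_sinh_mul_log_atTop {a : ℝ} (ha : 1 < a) :
    Tendsto (fun d => d / sinh (a * log d)) atTop (𝓝 0) :=
  ((tendsto_exp_div_sinh_mul_atTop ha).comp tendsto_log_atTop).congr' <|
    (eventually_gt_atTop 0).mono fun d hd => by simp [exp_log hd]

end Real

section CatenoidIntegral

variable {d b x : ℝ}

lemma hasDerivAt_arccos_div_sinh (hd : 0 < d) (hx : d < sinh x) :
    HasDerivAt (fun y => arccos (d / sinh y)) (d / √(sinh x ^ 2 - d ^ 2) / tanh x) x := by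
  have hs : 0 < sinh x := hd.trans hx
  have hsq : √(1 - (d / sinh x) ^ 2) = √(sinh x ^ 2 - d ^ 2) / sinh x := by
    rw [← sqrt_sq hs.le, ← sqrt_div' _ (sq_nonneg _), sqrt_sq hs.le]
    congr 1
    field_simp
  refine ((hasDerivAt_arccos (by linarith [div_pos hd hs]) ((div_lt_one hs).2 hx).ne).comp x
    ((hasDerivAt_const x d).div (hasDerivAt_sinh x) hs.ne')).congr_deriv ?_
  rw [hsq, tanh_eq_sinh_div_cosh]
  field_simp
  ring

lemma continuousOn_arccos_div_sinh (hd : 0 < d) :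
    ContinuousOn (fun y => arccos (d / sinh y)) (Ici (arsinh d)) :=
  continuous_arccos.comp_continuousOn <| continuousOn_const.div continuous_sinh.continuousOn
    fun y hy => (hd.trans_le (by simpa using sinh_le_sinh.2 (mem_Ici.1 hy))).ne'

lemma catenoid_div_tanh_nonneg (hd : 0 < d) (hx : arsinh d < x) :
    0 ≤ d / √(sinh x ^ 2 - d ^ 2) / tanh x :=
  div_nonneg (by positivity) (tanh_pos ((arsinh_pos_iff.2 hd).trans hx)).le

lemma integrableOn_catenoid_div_tanh (hd : 0 < d) :
    IntegrableOn (fun x => d / √(sinh x ^ 2 - d ^ 2) / tanh x) (Ioc (arsinh d) b) :=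
  intervalIntegral.integrableOn_deriv_of_nonneg
    ((continuousOn_arccos_div_sinh hd).mono Icc_subset_Ici_self)
    (fun _ hx => hasDerivAt_arccos_div_sinh hd (lt_sinh_of_arsinh_lt hx.1))
    fun _ hx => catenoid_div_tanh_nonneg hd hx.1

lemma setIntegral_catenoid_div_tanh (hd : 0 < d) (hb : arsinh d ≤ b) :
    ∫ x in Ioc (arsinh d) b, d / √(sinh x ^ 2 - d ^ 2) / tanh x = arccos (d / sinh b) := by
  rw [← intervalIntegral.integral_of_le hb,
    intervalIntegral.integral_eq_sub_of_hasDeriv_right_of_le hb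
      ((continuousOn_arccos_div_sinh hd).mono Icc_subset_Ici_self)
      (fun x hx => (hasDerivAt_arccos_div_sinh hd (lt_sinh_of_arsinh_lt hx.1)).hasDerivWithinAt)
      ((intervalIntegrable_iff_integrableOn_Ioc_of_le hb).2 (integrableOn_catenoid_div_tanh hd))]
  simp [hd.ne']

lemma setIntegral_catenoid_mem_Icc (hd : 0 < d) (hb : arsinh d ≤ b) :
    ∫ x in Ioc (arsinh d) b, d / √(sinh x ^ 2 - d ^ 2) ∈
      Icc (tanh (arsinh d) * arccos (d / sinh b)) (arccos (d / sinh b)) := by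
  set g := fun x => d / √(sinh x ^ 2 - d ^ 2) / tanh x
  have hg : IntegrableOn g (Ioc (arsinh d) b) := integrableOn_catenoid_div_tanh hd
  have hf : EqOn (fun x => d / √(sinh x ^ 2 - d ^ 2)) (fun x => tanh x * g x)
      (Ioc (arsinh d) b) := fun x hx =>
    (mul_div_cancel₀ _ (tanh_pos ((arsinh_pos_iff.2 hd).trans hx.1)).ne').symm
  have hf_int : IntegrableOn (fun x => tanh x * g x) (Ioc (arsinh d) b) :=
    hg.bdd_mul continuous_tanh.aestronglyMeasurable (c := 1)
      (ae_of_all _ fun x => (abs_tanh_lt_one x).le)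
  rw [setIntegral_congr_fun measurableSet_Ioc hf, ← setIntegral_catenoid_div_tanh hd hb,
    ← integral_const_mul]
  exact ⟨setIntegral_mono_on (hg.const_mul _) hf_int measurableSet_Ioc fun x hx =>
      mul_le_mul_of_nonneg_right (tanh_monotone hx.1.le) (catenoid_div_tanh_nonneg hd hx.1),
    setIntegral_mono_on hf_int hg measurableSet_Ioc fun x hx =>
      mul_le_of_le_one_left (catenoid_div_tanh_nonneg hd hx.1) (tanh_lt_one x).le⟩

end CatenoidIntegral

theorem catenoid_half_height_tendsto :
    Tendsto (fun d : ℝ =>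
        ∫ x in Set.Ioc (Real.arsinh d) ((3/2) * Real.log d),
          d / Real.sqrt ((Real.sinh x) ^ 2 - d ^ 2))
      atTop (nhds (Real.pi / 2)) := by
  have hratio := tendsto_div_sinh_mul_log_atTop (a := 3/2) (by norm_num)
  have harccos : Tendsto (fun d => arccos (d / sinh ((3/2) * log d))) atTop (𝓝 (π / 2)) := by
    simpa [Function.comp_def] using (continuous_arccos.tendsto 0).comp hratio
  have hlower : Tendsto (fun d => tanh (arsinh d) * arccos (d / sinh ((3/2) * log d)))
      atTop (𝓝 (π / 2)) := by
    simpa using (tendsto_tanh_atTop.comp tendsto_arsinh_atTop).mul harccos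
  have hbounds : ∀ᶠ d in atTop, ∫ x in Ioc (arsinh d) ((3/2) * log d),
      d / √(sinh x ^ 2 - d ^ 2) ∈ Icc (tanh (arsinh d) * arccos (d / sinh ((3/2) * log d)))
        (arccos (d / sinh ((3/2) * log d))) := by
    filter_upwards [hratio.eventually (gt_mem_nhds one_pos), eventually_gt_atTop 1]
      with d hlt hd
    have hsinh : 0 < sinh ((3/2) * log d) := sinh_pos_iff.2 (by positivity [log_pos hd])
    have hdomain : arsinh d ≤ (3/2) * log d :=
      (arsinh_le_arsinh.2 ((div_lt_one hsinh).1 hlt).le).trans_eq (arsinh_sinh _)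
    exact setIntegral_catenoid_mem_Icc (by linarith) hdomain
  exact tendsto_of_tendsto_of_tendsto_of_le_of_le' hlower harccos
    (hbounds.mono fun _ h => h.1) (hbounds.mono fun _ h => h.2)
end

section
/- For every real d > 0, the function x ↦ d / √((sinh x)² − d²) is Lebesgue integrable on the interval (arsinh d, ∞), and ∫_{arsinh d}^{∞} d / √((sinh x)² − d²) dx < π/2. -/
open Real MeasureTheory Set Filter

/-- `Real.sqrt` tends to infinity at infinity. -/
lemma sqrt_tendsto_atTop' : Tendsto Real.sqrt atTop atTop := by
  rw [tendsto_atTop_atTop]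
  intro b
  refine ⟨(max b 0) ^ 2, fun x hx => ?_⟩
  calc b ≤ max b 0 := le_max_left b 0
    _ = Real.sqrt ((max b 0) ^ 2) := (Real.sqrt_sq (le_max_right b 0)).symm
    _ ≤ Real.sqrt x := Real.sqrt_le_sqrt hx

/-- The key algebraic inequality: for `x > arsinh d`,
`d^2 * (exp (2*(x-a)) - 1) < sinh x ^ 2 - d ^ 2` where `a = arsinh d`. -/
lemma key_ineq {d x : ℝ} (hd : 0 < d) (hx : Real.arsinh d < x) :
    d ^ 2 * (Real.exp (2 * (x - Real.arsinh d)) - 1) < Real.sinh x ^ 2 - d ^ 2 := by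
  set a := Real.arsinh d with ha
  have hsa : Real.sinh a = d := Real.sinh_arsinh d
  have ha0 : 0 < a := by
    rw [ha]; rwa [← Real.arsinh_zero, Real.arsinh_lt_arsinh]
  set u := Real.exp x with hu
  set v := Real.exp a with hv
  have hu0 : 0 < u := Real.exp_pos x
  have hv0 : 0 < v := Real.exp_pos a
  have hv1 : 1 < v := by rw [hv]; exact Real.one_lt_exp_iff.mpr ha0
  have huv : v < u := Real.exp_lt_exp.mpr hx
  have h1 : Real.sinh x = (u - u⁻¹) / 2 := by
    rw [Real.sinh_eq, hu, Real.exp_neg]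
  have h2 : d = (v - v⁻¹) / 2 := by
    rw [← hsa, Real.sinh_eq, hv, Real.exp_neg]
  have h3 : Real.exp (2 * (x - a)) = u ^ 2 / v ^ 2 := by
    rw [two_mul, Real.exp_add, Real.exp_sub, hu, hv]; ring
  rw [h1, h2, h3]
  have key : ((u - u⁻¹) / 2) ^ 2 - ((v - v⁻¹) / 2) ^ 2 -
      ((v - v⁻¹) / 2) ^ 2 * (u ^ 2 / v ^ 2 - 1)
      = (u ^ 2 - v ^ 2) * ((u ^ 2 - 1) * v ^ 2 + (v ^ 2 - 1) * u ^ 2) /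
        (4 * u ^ 2 * v ^ 4) := by
    field_simp
    ring
  have hnum : 0 < (u ^ 2 - v ^ 2) * ((u ^ 2 - 1) * v ^ 2 + (v ^ 2 - 1) * u ^ 2) := by
    have hu1 : 1 < u := hv1.trans huv
    apply mul_pos
    · nlinarith
    · have hA : 0 < (u ^ 2 - 1) * v ^ 2 := mul_pos (by nlinarith) (by positivity)
      have hB : 0 < (v ^ 2 - 1) * u ^ 2 := mul_pos (by nlinarith) (by positivity)
      linarith
  have hfrac : 0 < (u ^ 2 - v ^ 2) * ((u ^ 2 - 1) * v ^ 2 + (v ^ 2 - 1) * u ^ 2) /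
      (4 * u ^ 2 * v ^ 4) := div_pos hnum (by positivity)
  linarith [key ▸ hfrac]

theorem catenoid_total_half_height_lt :
    ∀ d : ℝ, 0 < d →
      IntegrableOn (fun x => d / Real.sqrt ((Real.sinh x) ^ 2 - d ^ 2))
        (Set.Ioi (Real.arsinh d)) ∧
      (∫ x in Set.Ioi (Real.arsinh d), d / Real.sqrt ((Real.sinh x) ^ 2 - d ^ 2))
        < Real.pi / 2 := by
  intro d hd
  set a := Real.arsinh d with ha
  set f : ℝ → ℝ := fun x => d / Real.sqrt ((Real.sinh x) ^ 2 - d ^ 2) with hf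
  set g : ℝ → ℝ := fun x => 1 / Real.sqrt (Real.exp (2 * (x - a)) - 1) with hg
  set G : ℝ → ℝ := fun x => Real.arctan (Real.sqrt (Real.exp (2 * (x - a)) - 1)) with hG
  -- positivity of the inner expressions on `Ioi a`
  have hE : ∀ x ∈ Set.Ioi a, 0 < Real.exp (2 * (x - a)) - 1 := by
    intro x hx
    have hx' : (0:ℝ) < 2 * (x - a) := by
      simp only [Set.mem_Ioi] at hx; linarith
    have := Real.one_lt_exp_iff.mpr hx'
    linarith
  have hS : ∀ x ∈ Set.Ioi a, 0 < Real.sinh x ^ 2 - d ^ 2 := by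
    intro x hx
    have h := key_ineq hd hx
    have h2 := hE x hx
    nlinarith
  -- derivative of G
  have hderiv : ∀ x ∈ Set.Ioi a, HasDerivAt G (g x) x := by
    intro x hx
    have hEx := hE x hx
    have h1 : HasDerivAt (fun y => Real.exp (2 * (y - a)) - 1)
        (Real.exp (2 * (x - a)) * 2) x := by
      have : HasDerivAt (fun y : ℝ => 2 * (y - a)) 2 x := by
        simpa using ((hasDerivAt_id x).sub_const a).const_mul 2
      simpa using (this.exp.sub_const 1)
    have h2 : HasDerivAt (fun y => Real.sqrt (Real.exp (2 * (y - a)) - 1))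
        (Real.exp (2 * (x - a)) * 2 / (2 * Real.sqrt (Real.exp (2 * (x - a)) - 1))) x :=
      h1.sqrt hEx.ne'
    have h3 := h2.arctan
    have heq : (1 / (1 + Real.sqrt (Real.exp (2 * (x - a)) - 1) ^ 2)) *
        (Real.exp (2 * (x - a)) * 2 / (2 * Real.sqrt (Real.exp (2 * (x - a)) - 1)))
        = g x := by
      rw [Real.sq_sqrt hEx.le, hg]
      have hs : (0:ℝ) < Real.sqrt (Real.exp (2 * (x - a)) - 1) := Real.sqrt_pos.mpr hEx
      have hE1 : 1 + (Real.exp (2 * (x - a)) - 1) = Real.exp (2 * (x - a)) := by ring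
      rw [hE1]
      field_simp
    rw [← heq]
    exact h3
  -- continuity of G
  have hcont : ContinuousWithinAt G (Set.Ici a) a := by
    apply Continuous.continuousWithinAt
    exact Real.continuous_arctan.comp (Real.continuous_sqrt.comp
      ((Real.continuous_exp.comp (by continuity)).sub continuous_const))
  -- G tends to π/2 at infinity
  have htendsto : Tendsto G atTop (nhds (Real.pi / 2)) := by
    have h1 : Tendsto (fun x : ℝ => 2 * (x - a)) atTop atTop :=
      (tendsto_atTop_add_const_right _ (-a) tendsto_id).const_mul_atTop two_pos
    have h2 : Tendsto (fun x : ℝ => Real.exp (2 * (x - a)) - 1) atTop atTop :=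
      tendsto_atTop_add_const_right _ (-1) (Real.tendsto_exp_atTop.comp h1)
    have h3 : Tendsto (fun x : ℝ => Real.sqrt (Real.exp (2 * (x - a)) - 1)) atTop atTop :=
      sqrt_tendsto_atTop'.comp h2
    exact (Real.tendsto_arctan_atTop.mono_right nhdsWithin_le_nhds).comp h3
  have hgpos : ∀ x ∈ Set.Ioi a, 0 ≤ g x := by
    intro x hx
    rw [hg]
    positivity
  -- integrability of g and value of its integral
  have hg_int : IntegrableOn g (Set.Ioi a) :=
    integrableOn_Ioi_deriv_of_nonneg hcont hderiv hgpos htendsto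
  have hg_val : (∫ x in Set.Ioi a, g x) = Real.pi / 2 := by
    have := integral_Ioi_of_hasDerivAt_of_nonneg hcont hderiv hgpos htendsto
    rw [this, hG]
    simp
  -- pointwise strict bound f < g on Ioi a
  have hfg : ∀ x ∈ Set.Ioi a, f x < g x := by
    intro x hx
    have hEx := hE x hx
    have hSx := hS x hx
    have hkey := key_ineq hd hx
    rw [hf, hg]
    rw [div_lt_div_iff₀ (Real.sqrt_pos.mpr hSx) (Real.sqrt_pos.mpr hEx)]
    calc d * Real.sqrt (Real.exp (2 * (x - a)) - 1)
        = Real.sqrt (d ^ 2 * (Real.exp (2 * (x - a)) - 1)) := by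
          rw [Real.sqrt_mul (by positivity), Real.sqrt_sq hd.le]
      _ < Real.sqrt (Real.sinh x ^ 2 - d ^ 2) := Real.sqrt_lt_sqrt (by positivity) hkey
      _ = 1 * Real.sqrt (Real.sinh x ^ 2 - d ^ 2) := (one_mul _).symm
  have hf_nonneg : ∀ x ∈ Set.Ioi a, 0 ≤ f x := by
    intro x _
    rw [hf]
    positivity
  -- measurability of f
  have hf_meas : AEStronglyMeasurable f (volume.restrict (Set.Ioi a)) := by
    apply Measurable.aestronglyMeasurable
    exact (measurable_const.div
      (Real.continuous_sqrt.measurable.comp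
        ((Real.continuous_sinh.measurable.pow_const 2).sub measurable_const)))
  -- integrability of f
  have hf_int : IntegrableOn f (Set.Ioi a) := by
    refine hg_int.mono' hf_meas ?_
    refine (ae_restrict_iff' measurableSet_Ioi).mpr ?_
    filter_upwards with x hx
    rw [Real.norm_eq_abs, abs_of_nonneg (hf_nonneg x hx)]
    exact (hfg x hx).le
  refine ⟨hf_int, ?_⟩
  -- strict comparison of integrals
  have hsub_int : IntegrableOn (fun x => g x - f x) (Set.Ioi a) := hg_int.sub hf_int
  have hpos : 0 < ∫ x in Set.Ioi a, (g x - f x) := by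
    rw [setIntegral_pos_iff_support_of_nonneg_ae ?hnonneg hsub_int]
    case hnonneg =>
      refine (ae_restrict_iff' measurableSet_Ioi).mpr ?_
      filter_upwards with x hx
      exact sub_nonneg.mpr (hfg x hx).le
    have hsupp : Set.Ioi a ⊆ Function.support (fun x => g x - f x) := by
      intro x hx
      simp only [Function.mem_support]
      exact sub_ne_zero.mpr (hfg x hx).ne'
    have hss : Function.support (fun x => g x - f x) ∩ Set.Ioi a = Set.Ioi a :=
      Set.inter_eq_right.mpr hsupp
    rw [hss, Real.volume_Ioi]
    exact ENNReal.zero_lt_top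
  have heq : (∫ x in Set.Ioi a, (g x - f x)) =
      (∫ x in Set.Ioi a, g x) - ∫ x in Set.Ioi a, f x :=
    integral_sub hg_int hf_int
  have hlt : (∫ x in Set.Ioi a, f x) < ∫ x in Set.Ioi a, g x := by
    rw [heq] at hpos; linarith
  calc (∫ x in Set.Ioi a, f x) < ∫ x in Set.Ioi a, g x := hlt
    _ = Real.pi / 2 := hg_val
end

section
/- For every real d > 0, the function x ↦ d / √((sinh x)² − d²) is Lebesgue integrable on (arsinh d, ∞), the function t ↦ d / √(1 + d²·(cosh t)²) is Lebesgue integrable on (0, ∞), and ∫_{arsinh d}^{∞} d / √((sinh x)² − d²) dx = ∫_{0}^{∞} d / √(1 + d²·(cosh t)²) dt. -/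
/-!
Substitute `sinh x = d * cosh t` with `t > 0`, i.e. `x = arsinh (d * cosh t)`: this maps `(0, ∞)`
bijectively onto `(arsinh d, ∞)`, with `dx = d * sinh t / √(1 + d² cosh² t) dt` and
`√(sinh² x - d²) = d * sinh t`, so the integrands match under the one-dimensional change of
variables formula. Integrability comes from `d / √(1 + d² cosh² t) ≤ 1 / cosh t ≤ 2 e^{-t}`
and is transferred to the `x`-side by the same formula.
-/

open Real MeasureTheory Set

namespace Real

theorem image_cosh_Ioi_zero : cosh '' Ioi 0 = Ioi 1 :=
  coshOpenPartialHomeomorph.image_source_eq_target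

theorem image_arsinh_Ioi (a : ℝ) : arsinh '' Ioi a = Ioi (arsinh a) :=
  sinhOrderIso.symm.image_Ioi a

theorem hasDerivAt_arsinh_mul_cosh (d t : ℝ) :
    HasDerivAt (fun t => arsinh (d * cosh t)) (d * sinh t / √(1 + d ^ 2 * cosh t ^ 2)) t := by
  have h := (hasDerivAt_arsinh (d * cosh t)).comp t ((hasDerivAt_cosh t).const_mul d)
  rwa [mul_pow, ← div_eq_inv_mul] at h

theorem injOn_arsinh_mul_cosh {d : ℝ} (hd : d ≠ 0) :
    InjOn (fun t => arsinh (d * cosh t)) (Ici 0) :=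
  (arsinh_injective.comp (mul_right_injective₀ hd)).comp_injOn cosh_injOn

theorem image_arsinh_mul_cosh_Ioi_zero {d : ℝ} (hd : 0 < d) :
    (fun t => arsinh (d * cosh t)) '' Ioi 0 = Ioi (arsinh d) := by
  change (arsinh ∘ (d * ·) ∘ cosh) '' Ioi 0 = _
  rw [image_comp, image_comp, image_cosh_Ioi_zero, image_mul_left_Ioi hd, mul_one,
    image_arsinh_Ioi]

theorem sqrt_sq_mul_cosh_sq_sub_sq {d t : ℝ} (hd : 0 ≤ d) (ht : 0 ≤ t) :
    √((d * cosh t) ^ 2 - d ^ 2) = d * sinh t := by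
  rw [← sqrt_sq (mul_nonneg hd (sinh_nonneg_iff.mpr ht))]
  congr 1
  rw [mul_pow, mul_pow, sinh_sq]
  ring

theorem integrableOn_inv_cosh_Ioi (a : ℝ) : IntegrableOn (fun t => (cosh t)⁻¹) (Ioi a) := by
  refine ((exp_neg_integrableOn_Ioi a one_pos).const_mul 2).mono'
    (by fun_prop) (ae_of_all _ fun t => ?_)
  rw [norm_inv, norm_of_nonneg (cosh_pos t).le, neg_one_mul, exp_neg,
    inv_le_comm₀ (cosh_pos t) (by positivity), mul_inv, inv_inv, cosh_eq]
  linarith [exp_pos (-t)]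

theorem abs_div_sqrt_one_add_sq_mul_cosh_sq_le (d t : ℝ) :
    |d / √(1 + d ^ 2 * cosh t ^ 2)| ≤ (cosh t)⁻¹ := by
  have hS : 0 < √(1 + d ^ 2 * cosh t ^ 2) := sqrt_pos.mpr (by positivity)
  have hdc : |d| * cosh t ≤ √(1 + d ^ 2 * cosh t ^ 2) := by
    rw [← sqrt_sq (by positivity : 0 ≤ |d| * cosh t), mul_pow, sq_abs]
    exact sqrt_le_sqrt (by linarith)
  rwa [abs_div, abs_of_pos hS, ← one_div, div_le_div_iff₀ hS (cosh_pos t), one_mul]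

theorem integrableOn_div_sqrt_one_add_sq_mul_cosh_sq_Ioi (d a : ℝ) :
    IntegrableOn (fun t => d / √(1 + d ^ 2 * cosh t ^ 2)) (Ioi a) :=
  (integrableOn_inv_cosh_Ioi a).mono'
    (continuous_const.div (by fun_prop) fun _ =>
      (sqrt_pos.mpr (by positivity)).ne').aestronglyMeasurable
    (ae_of_all _ fun t => abs_div_sqrt_one_add_sq_mul_cosh_sq_le d t)

end Real

theorem catenoid_height_change_of_variables_infinite :
    ∀ d : ℝ, 0 < d →
      IntegrableOn (fun x => d / Real.sqrt ((Real.sinh x) ^ 2 - d ^ 2))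
        (Set.Ioi (Real.arsinh d)) ∧
      IntegrableOn (fun t => d / Real.sqrt (1 + d ^ 2 * (Real.cosh t) ^ 2))
        (Set.Ioi (0 : ℝ)) ∧
      (∫ x in Set.Ioi (Real.arsinh d), d / Real.sqrt ((Real.sinh x) ^ 2 - d ^ 2))
        = ∫ t in Set.Ioi (0 : ℝ), d / Real.sqrt (1 + d ^ 2 * (Real.cosh t) ^ 2) := by
  intro d hd
  have hderiv : ∀ t ∈ Ioi (0 : ℝ), HasDerivWithinAt (fun t => arsinh (d * cosh t))
      (d * sinh t / √(1 + d ^ 2 * cosh t ^ 2)) (Ioi 0) t :=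
    fun t _ => (hasDerivAt_arsinh_mul_cosh d t).hasDerivWithinAt
  have hinj := (injOn_arsinh_mul_cosh hd.ne').mono Ioi_subset_Ici_self
  have hEq : EqOn (fun t => |d * sinh t / √(1 + d ^ 2 * cosh t ^ 2)| •
      (d / √(sinh (arsinh (d * cosh t)) ^ 2 - d ^ 2)))
      (fun t => d / √(1 + d ^ 2 * cosh t ^ 2)) (Ioi 0) := fun t (ht : 0 < t) => by
    dsimp only
    rw [sinh_arsinh, sqrt_sq_mul_cosh_sq_sub_sq hd.le ht.le, abs_of_pos (by positivity),
      smul_eq_mul]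
    field_simp
  have hint := integrableOn_div_sqrt_one_add_sq_mul_cosh_sq_Ioi d 0
  have hiff := integrableOn_image_iff_integrableOn_abs_deriv_smul measurableSet_Ioi hderiv hinj
    fun x => d / √(sinh x ^ 2 - d ^ 2)
  rw [image_arsinh_mul_cosh_Ioi_zero hd] at hiff
  refine ⟨hiff.2 (hint.congr_fun hEq.symm measurableSet_Ioi), hint, ?_⟩
  rw [← image_arsinh_mul_cosh_Ioi_zero hd,
    integral_image_eq_integral_abs_deriv_smul measurableSet_Ioi hderiv hinj]
  exact setIntegral_congr_fun measurableSet_Ioi hEq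
end
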